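/- Let ρ, p : ℝ × [−π,π] → ℝ and u : ℝ × [−π,π] → ℝ² be smooth and 2π-periodic in x₁, satisfying ∇·u = 0, u + ∇p = −(0,ρ), u₂(x₁,±π) = 0, and the stationarity condition u·∇ρ = 0. Then u ≡ 0 and ∂_{x₁}ρ ≡ 0; that is, every smooth stationary solution of the IPM equation on the strip S = T×[−π,π] is a horizontally stratified state ρ = g(x₂). -/

import Mathlib

open Real MeasureTheory Filter Topology
open scoped ENNReal NNReal

noncomputable section

/-- Points of the plane; functions on the strip `S = T × [-π,π]` are identified with functions on
`ℝ × [-π,π]` that are `2π`-periodic in `x₁` (smooth functions on the closed strip are viewed as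
restrictions of smooth functions on `ℝ²`). -/
abbrev Pt : Type := ℝ × ℝ

/-- `2π`-periodicity in the first variable. -/
def Per1 (f : Pt → ℝ) : Prop := ∀ x : Pt, f (x.1 + 2 * π, x.2) = f x

/-- Partial derivative in the first space variable. -/
def pd1 (f : Pt → ℝ) (x : Pt) : ℝ := deriv (fun y => f (y, x.2)) x.1

/-- Partial derivative in the second space variable. -/
def pd2 (f : Pt → ℝ) (x : Pt) : ℝ := deriv (fun y => f (x.1, y)) x.2

/-- The fundamental domain `[-π,π] × [-π,π]` of the strip `S`. -/
def QS : Set Pt := Set.Icc (-π) π ×ˢ Set.Icc (-π) π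

/-- The Dirichlet eigenfunctions in the vertical variable:
`b_q(y) = cos(qy/2)` for `q` odd and `b_q(y) = sin(qy/2)` for `q` even. -/
def bq (q : ℕ) (y : ℝ) : ℝ :=
  if q % 2 = 1 then Real.cos (q * y / 2) else Real.sin (q * y / 2)

/-- Eigenfunction coefficients on the strip:
`c_{p,q}(f) = (2π²)⁻¹ ∫_S f(x) e^{-ipx₁} b_q(x₂) dx`. -/
def scoef (f : Pt → ℝ) (pq : ℤ × ℕ) : ℂ :=
  ((2 * π ^ 2 : ℝ))⁻¹ *
    ∫ x in QS, (f x : ℂ) * Complex.exp (-Complex.I * (((pq.1 : ℝ) * x.1 : ℝ) : ℂ)) *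
      ((bq pq.2 x.2 : ℝ) : ℂ)

/-- Homogeneous Sobolev norm on the strip (valued in `ℝ≥0∞`):
`‖f‖_{Ḣ^s(S)}² = 2π² Σ_{p∈ℤ, q≥1} (p² + q²/4)^s |c_{p,q}(f)|²`. -/
def sobS (s : ℝ) (f : Pt → ℝ) : ℝ≥0∞ :=
  (ENNReal.ofReal (2 * π ^ 2) *
    ∑' pq : ℤ × ℕ, (if 1 ≤ pq.2 then
      ENNReal.ofReal (((pq.1 : ℝ) ^ 2 + (pq.2 : ℝ) ^ 2 / 4) ^ s) * (‖scoef f pq‖₊ : ℝ≥0∞) ^ 2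
      else 0)) ^ (1/2 : ℝ)

/-- Inhomogeneous Sobolev norm on the strip: `‖f‖_{H^s(S)}² = ‖f‖_{Ḣ^s(S)}² + ‖f‖_{L²(S)}²`. -/
def hsobS (s : ℝ) (f : Pt → ℝ) : ℝ≥0∞ :=
  (sobS s f ^ 2 + ∫⁻ x in QS, ENNReal.ofReal (f x ^ 2)) ^ (1/2 : ℝ)

/-- A global smooth solution of the IPM system on the strip `S = T × [-π,π]`:
`∂_t ρ + u·∇ρ = 0`, `∇·u = 0`, `u + ∇p = -(0,ρ)` on `S` for all `t ≥ 0`, with `ρ, u, p` smooth,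
`2π`-periodic in `x₁`, and the no-flow condition `u₂ = 0` on `x₂ = ±π`. -/
structure IsIPMSolS (ρ : Pt → ℝ → ℝ) (u : Pt → ℝ → Pt) (p : Pt → ℝ → ℝ) : Prop where
  smooth_rho : ContDiff ℝ (⊤ : ℕ∞) fun q : Pt × ℝ => ρ q.1 q.2
  smooth_u : ContDiff ℝ (⊤ : ℕ∞) fun q : Pt × ℝ => u q.1 q.2
  smooth_p : ContDiff ℝ (⊤ : ℕ∞) fun q : Pt × ℝ => p q.1 q.2
  per_rho : ∀ t : ℝ, 0 ≤ t → Per1 fun x => ρ x t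
  per_u1 : ∀ t : ℝ, 0 ≤ t → Per1 fun x => (u x t).1
  per_u2 : ∀ t : ℝ, 0 ≤ t → Per1 fun x => (u x t).2
  per_p : ∀ t : ℝ, 0 ≤ t → Per1 fun x => p x t
  transport : ∀ x : Pt, x.2 ∈ Set.Icc (-π) π → ∀ t : ℝ, 0 ≤ t →
    deriv (fun τ => ρ x τ) t
      + (u x t).1 * pd1 (fun y => ρ y t) x + (u x t).2 * pd2 (fun y => ρ y t) x = 0
  incomp : ∀ x : Pt, x.2 ∈ Set.Icc (-π) π → ∀ t : ℝ, 0 ≤ t →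
    pd1 (fun y => (u y t).1) x + pd2 (fun y => (u y t).2) x = 0
  darcy1 : ∀ x : Pt, x.2 ∈ Set.Icc (-π) π → ∀ t : ℝ, 0 ≤ t →
    (u x t).1 + pd1 (fun y => p y t) x = 0
  darcy2 : ∀ x : Pt, x.2 ∈ Set.Icc (-π) π → ∀ t : ℝ, 0 ≤ t →
    (u x t).2 + pd2 (fun y => p y t) x = -ρ x t
  noflow_top : ∀ x₁ : ℝ, ∀ t : ℝ, 0 ≤ t → (u (x₁, π) t).2 = 0
  noflow_bot : ∀ x₁ : ℝ, ∀ t : ℝ, 0 ≤ t → (u (x₁, -π) t).2 = 0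

/-!
With `w = p + ρ x₂`, Darcy's law reads `∇w = -u + x₂ ∇ρ`, so incompressibility and
stationarity give `div (w u) = ∇w · u + w div u = -|u|²`. The flux of `w u` through the
boundary of the fundamental domain cancels on the vertical sides by periodicity and vanishes on
the horizontal ones by the no-flow condition, so `∫ |u|² = 0` and `u ≡ 0`. Darcy's law then
says `∂₁p = 0` and `ρ = -∂₂p`, hence `ρ` does not depend on `x₁`.
-/

open Set

section PartialDerivatives

variable {f g : Pt → ℝ} {x : Pt}

lemma DifferentiableAt.hasDerivAt_horizontal_slice (hf : DifferentiableAt ℝ f x) :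
    HasDerivAt (fun y => f (y, x.2)) (fderiv ℝ f x (1, 0)) x.1 :=
  hf.hasFDerivAt.comp_hasDerivAt_of_eq x.1 ((hasDerivAt_id _).prodMk (hasDerivAt_const _ _)) rfl

lemma DifferentiableAt.hasDerivAt_vertical_slice (hf : DifferentiableAt ℝ f x) :
    HasDerivAt (fun y => f (x.1, y)) (fderiv ℝ f x (0, 1)) x.2 :=
  hf.hasFDerivAt.comp_hasDerivAt_of_eq x.2 ((hasDerivAt_const _ _).prodMk (hasDerivAt_id _)) rfl

lemma pd1_eq_fderiv (hf : DifferentiableAt ℝ f x) : pd1 f x = fderiv ℝ f x (1, 0) :=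
  hf.hasDerivAt_horizontal_slice.deriv

lemma pd2_eq_fderiv (hf : DifferentiableAt ℝ f x) : pd2 f x = fderiv ℝ f x (0, 1) :=
  hf.hasDerivAt_vertical_slice.deriv

lemma pd1_mul (hf : DifferentiableAt ℝ f x) (hg : DifferentiableAt ℝ g x) :
    pd1 (fun y => f y * g y) x = pd1 f x * g x + f x * pd1 g x :=
  deriv_mul hf.hasDerivAt_horizontal_slice.differentiableAt hg.hasDerivAt_horizontal_slice.differentiableAt

lemma pd2_mul (hf : DifferentiableAt ℝ f x) (hg : DifferentiableAt ℝ g x) :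
    pd2 (fun y => f y * g y) x = pd2 f x * g x + f x * pd2 g x :=
  deriv_mul hf.hasDerivAt_vertical_slice.differentiableAt hg.hasDerivAt_vertical_slice.differentiableAt

lemma pd1_add (hf : DifferentiableAt ℝ f x) (hg : DifferentiableAt ℝ g x) :
    pd1 (fun y => f y + g y) x = pd1 f x + pd1 g x :=
  deriv_add hf.hasDerivAt_horizontal_slice.differentiableAt hg.hasDerivAt_horizontal_slice.differentiableAt

lemma pd2_add (hf : DifferentiableAt ℝ f x) (hg : DifferentiableAt ℝ g x) :
    pd2 (fun y => f y + g y) x = pd2 f x + pd2 g x :=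
  deriv_add hf.hasDerivAt_vertical_slice.differentiableAt hg.hasDerivAt_vertical_slice.differentiableAt

lemma pd1_snd : pd1 Prod.snd x = 0 := deriv_const _ _

lemma pd2_snd : pd2 Prod.snd x = 1 := deriv_id _

end PartialDerivatives

lemma integral_Icc_pd1_add_pd2 {F G : Pt → ℝ} (hF : ContDiff ℝ 1 F) (hG : ContDiff ℝ 1 G)
    {a b : Pt} (hab : a ≤ b) :
    ∫ x in Icc a b, (pd1 F x + pd2 G x) =
      (((∫ s in a.1..b.1, G (s, b.2)) - ∫ s in a.1..b.1, G (s, a.2)) +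
        ∫ t in a.2..b.2, F (b.1, t)) - ∫ t in a.2..b.2, F (a.1, t) := by
  have hF' := hF.differentiable one_ne_zero
  have hG' := hG.differentiable one_ne_zero
  simp only [pd1_eq_fderiv (hF' _), pd2_eq_fderiv (hG' _)]
  refine integral_divergence_prod_Icc_of_hasFDerivAt_of_le F G (fderiv ℝ F) (fderiv ℝ G) a b hab
    hF.continuous.continuousOn hG.continuous.continuousOn (fun x _ => (hF' x).hasFDerivAt)
    (fun x _ => (hG' x).hasFDerivAt) ?_
  exact (((hF.continuous_fderiv one_ne_zero).clm_apply continuous_const).add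
    ((hG.continuous_fderiv one_ne_zero).clm_apply continuous_const)).integrableOn_Icc

lemma QS_eq_Icc : QS = Icc (-π, -π) (π, π) := Icc_prod_Icc _ _ _ _

lemma setIntegral_QS_pd1_add_pd2_eq_zero {F G : Pt → ℝ} (hF : ContDiff ℝ 1 F)
    (hG : ContDiff ℝ 1 G) (hF_per : Per1 F) (hG_top : ∀ s, G (s, π) = 0)
    (hG_bot : ∀ s, G (s, -π) = 0) :
    ∫ x in QS, (pd1 F x + pd2 G x) = 0 := by
  have hπ : (-π, -π) ≤ ((π, π) : Pt) := ⟨by linarith [pi_pos], by linarith [pi_pos]⟩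
  have hF_sides : ∀ t, F (π, t) = F (-π, t) := fun t => by
    simpa [show -π + 2 * π = π by ring] using hF_per (-π, t)
  rw [QS_eq_Icc, integral_Icc_pd1_add_pd2 hF hG hπ]
  simp [hG_top, hG_bot, hF_sides]

lemma closure_interior_QS : closure (interior QS) = QS := by
  have hπ : -π ≠ π := by linarith [pi_pos]
  rw [QS, interior_prod_eq, closure_prod_eq, closure_interior_Icc hπ]

lemma eqOn_zero_of_setIntegral_eq_zero {F : Pt → ℝ} {s : Set Pt} (hF : Continuous F)
    (hF_nonneg : ∀ x, 0 ≤ F x) (hs : IsCompact s) (hs_int : s ⊆ closure (interior s))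
    (hI : ∫ x in s, F x = 0) : EqOn F 0 s := by
  have hae : F =ᵐ[volume.restrict s] 0 :=
    (integral_eq_zero_iff_of_nonneg hF_nonneg (hF.continuousOn.integrableOn_compact hs)).mp hI
  exact Measure.eqOn_of_ae_eq hae hF.continuousOn continuousOn_const hs_int

lemma Per1.eq_zero_of_eqOn_QS {f : Pt → ℝ} (hf : Per1 f) (hQS : EqOn f 0 QS) {x : Pt}
    (hx : x.2 ∈ Icc (-π) π) : f x = 0 := by
  have hper : Function.Periodic (fun s => f (s, x.2)) (2 * π) := fun s => hf (s, x.2)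
  obtain ⟨s, hs, hfs⟩ := hper.exists_mem_Ico (by positivity) x.1 (-π)
  rw [show -π + 2 * π = π by ring] at hs
  exact hfs.trans (hQS ⟨Ico_subset_Icc_self hs, hx⟩)

lemma Per1.eq_zero_of_setIntegral_QS_eq_zero {F : Pt → ℝ} (hper : Per1 F) (hF : Continuous F)
    (hF_nonneg : ∀ x, 0 ≤ F x) (hI : ∫ x in QS, F x = 0) {x : Pt} (hx : x.2 ∈ Icc (-π) π) :
    F x = 0 :=
  hper.eq_zero_of_eqOn_QS (eqOn_zero_of_setIntegral_eq_zero hF hF_nonneg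
    (by rw [QS_eq_Icc]; exact isCompact_Icc) closure_interior_QS.superset hI) hx

lemma pd1_add_pd2_flux_eq_neg_sq {u : Pt → Pt} {p ρ : Pt → ℝ} {x : Pt}
    (hu : DifferentiableAt ℝ u x) (hp : DifferentiableAt ℝ p x) (hρ : DifferentiableAt ℝ ρ x)
    (hdiv : pd1 (fun y => (u y).1) x + pd2 (fun y => (u y).2) x = 0)
    (hdarcy1 : (u x).1 + pd1 p x = 0) (hdarcy2 : (u x).2 + pd2 p x = -ρ x)
    (hstat : (u x).1 * pd1 ρ x + (u x).2 * pd2 ρ x = 0) :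
    pd1 (fun y => (p y + ρ y * y.2) * (u y).1) x + pd2 (fun y => (p y + ρ y * y.2) * (u y).2) x =
      -((u x).1 ^ 2 + (u x).2 ^ 2) := by
  have hu1 : DifferentiableAt ℝ (fun y => (u y).1) x := hu.fst
  have hu2 : DifferentiableAt ℝ (fun y => (u y).2) x := hu.snd
  have hρy : DifferentiableAt ℝ (fun y => ρ y * y.2) x := hρ.mul differentiableAt_snd
  have hw : DifferentiableAt ℝ (fun y => p y + ρ y * y.2) x := hp.add hρy
  rw [pd1_mul hw hu1, pd2_mul hw hu2, pd1_add hp hρy, pd2_add hp hρy,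
    pd1_mul hρ differentiableAt_snd, pd2_mul hρ differentiableAt_snd, pd1_snd, pd2_snd]
  linear_combination (p x + ρ x * x.2) * hdiv + x.2 * hstat + (u x).1 * hdarcy1 +
    (u x).2 * hdarcy2

section Stratification

variable {f : Pt → ℝ} {c d : ℝ}

lemma eq_of_pd1_eq_zero (hf : Differentiable ℝ f) {t : ℝ} (h : ∀ s, pd1 f (s, t) = 0)
    (s s' : ℝ) : f (s, t) = f (s', t) :=
  is_const_of_deriv_eq_zero (f := fun s => f (s, t))
    (fun s => (hf (s, t)).hasDerivAt_horizontal_slice.differentiableAt) h s s'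

lemma pd2_eq_of_forall_eq {s s' t : ℝ} (ht : t ∈ Ioo c d)
    (h : ∀ τ ∈ Icc c d, f (s, τ) = f (s', τ)) : pd2 f (s, t) = pd2 f (s', t) := by
  refine Filter.EventuallyEq.deriv_eq ?_
  filter_upwards [Ioo_mem_nhds ht.1 ht.2] with τ hτ using h τ (Ioo_subset_Icc_self hτ)

lemma pd1_eq_zero_of_forall_eq {t : ℝ} (h : ∀ s, f (s, t) = f (0, t)) (s : ℝ) :
    pd1 f (s, t) = 0 := by
  change deriv (fun s => f (s, t)) s = 0
  rw [funext h]
  exact deriv_const _ _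

lemma eq_of_pd1_eq_zero_of_pd2_eq_neg {p ρ : Pt → ℝ} (hp : Differentiable ℝ p)
    (hρ : Continuous ρ) (hcd : c < d) (hp1 : ∀ x : Pt, x.2 ∈ Icc c d → pd1 p x = 0)
    (hp2 : ∀ x : Pt, x.2 ∈ Icc c d → pd2 p x = -ρ x) {t : ℝ} (ht : t ∈ Icc c d) (s : ℝ) :
    ρ (s, t) = ρ (0, t) := by
  have hp_const : ∀ τ ∈ Icc c d, p (s, τ) = p (0, τ) := fun τ hτ =>
    eq_of_pd1_eq_zero hp (fun s => hp1 (s, τ) hτ) s 0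
  have h_open : EqOn (fun τ => ρ (s, τ)) (fun τ => ρ (0, τ)) (Ioo c d) := fun τ hτ => by
    have hτ' := Ioo_subset_Icc_self hτ
    simpa [hp2 (s, τ) hτ', hp2 (0, τ) hτ'] using pd2_eq_of_forall_eq hτ hp_const
  have h_closed := h_open.closure (by fun_prop) (by fun_prop)
  rw [closure_Ioo hcd.ne] at h_closed
  exact h_closed ht

end Stratification

/-- Every smooth stationary solution of the IPM system on the strip
`S = T × [-π,π]` has vanishing velocity and horizontally stratified density: if smooth
`2π`-periodic-in-`x₁` functions `u, p, ρ` satisfy `∇·u = 0`, Darcy's law `u + ∇p = -(0,ρ)`, the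
no-flow condition `u₂(x₁, ±π) = 0`, and the stationarity condition `u·∇ρ = 0` on `S`, then
`u ≡ 0` and `∂_{x₁}ρ ≡ 0` on `S`, i.e. `ρ = g(x₂)` for some `g`. -/
theorem ipm_strip_stationary_classification
    (u : Pt → Pt) (p ρ : Pt → ℝ)
    (hu : ContDiff ℝ (⊤ : ℕ∞) u) (hp : ContDiff ℝ (⊤ : ℕ∞) p) (hρ : ContDiff ℝ (⊤ : ℕ∞) ρ)
    (hper_u1 : Per1 fun x => (u x).1) (hper_u2 : Per1 fun x => (u x).2)
    (hper_p : Per1 p) (hper_ρ : Per1 ρ)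
    (hdiv : ∀ x : Pt, x.2 ∈ Set.Icc (-π) π →
      pd1 (fun y => (u y).1) x + pd2 (fun y => (u y).2) x = 0)
    (hdarcy1 : ∀ x : Pt, x.2 ∈ Set.Icc (-π) π → (u x).1 + pd1 p x = 0)
    (hdarcy2 : ∀ x : Pt, x.2 ∈ Set.Icc (-π) π → (u x).2 + pd2 p x = -ρ x)
    (hnoflow_top : ∀ x₁ : ℝ, (u (x₁, π)).2 = 0)
    (hnoflow_bot : ∀ x₁ : ℝ, (u (x₁, -π)).2 = 0)
    (hstat : ∀ x : Pt, x.2 ∈ Set.Icc (-π) π →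
      (u x).1 * pd1 ρ x + (u x).2 * pd2 ρ x = 0) :
    (∀ x : Pt, x.2 ∈ Set.Icc (-π) π → u x = 0 ∧ pd1 ρ x = 0)
    ∧ ∃ g : ℝ → ℝ, ∀ x : Pt, x.2 ∈ Set.Icc (-π) π → ρ x = g x.2 := by
  have hu' : ContDiff ℝ 1 u := hu.of_le (by exact_mod_cast le_top)
  have hp' : ContDiff ℝ 1 p := hp.of_le (by exact_mod_cast le_top)
  have hρ' : ContDiff ℝ 1 ρ := hρ.of_le (by exact_mod_cast le_top)
  have hw : ContDiff ℝ 1 fun x : Pt => p x + ρ x * x.2 := hp'.add (hρ'.mul contDiff_snd)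
  have hflux : ∫ x in QS, (pd1 (fun y => (p y + ρ y * y.2) * (u y).1) x +
      pd2 (fun y => (p y + ρ y * y.2) * (u y).2) x) = 0 :=
    setIntegral_QS_pd1_add_pd2_eq_zero (hw.mul hu'.fst) (hw.mul hu'.snd)
      (fun x => by simp only [hper_p x, hper_ρ x, hper_u1 x])
      (fun s => by simp [hnoflow_top]) (fun s => by simp [hnoflow_bot])
  have henergy : ∫ x in QS, ((u x).1 ^ 2 + (u x).2 ^ 2) = 0 := by
    rw [← neg_eq_zero, ← integral_neg, ← hflux]
    refine setIntegral_congr_fun (measurableSet_Icc.prod measurableSet_Icc) fun x hx => ?_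
    exact (pd1_add_pd2_flux_eq_neg_sq (hu'.differentiable one_ne_zero x)
      (hp'.differentiable one_ne_zero x) (hρ'.differentiable one_ne_zero x) (hdiv x hx.2)
      (hdarcy1 x hx.2) (hdarcy2 x hx.2) (hstat x hx.2)).symm
  have hu_zero : ∀ x : Pt, x.2 ∈ Icc (-π) π → u x = 0 := fun x hx => by
    have hsq_per : Per1 fun x => (u x).1 ^ 2 + (u x).2 ^ 2 := fun x => by
      simp only [hper_u1 x, hper_u2 x]
    have hsq := hsq_per.eq_zero_of_setIntegral_QS_eq_zero (by fun_prop)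
      (fun x => by positivity) henergy hx
    obtain ⟨h1, h2⟩ := (add_eq_zero_iff_of_nonneg (sq_nonneg _) (sq_nonneg _)).1 hsq
    exact Prod.ext (pow_eq_zero_iff two_ne_zero |>.1 h1) (pow_eq_zero_iff two_ne_zero |>.1 h2)
  have hstrat : ∀ x : Pt, x.2 ∈ Icc (-π) π → ρ x = ρ (0, x.2) := fun x hx =>
    eq_of_pd1_eq_zero_of_pd2_eq_neg (hp'.differentiable one_ne_zero) hρ.continuous
      (by linarith [pi_pos]) (fun x hx => by simpa [hu_zero x hx] using hdarcy1 x hx)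
      (fun x hx => by simpa [hu_zero x hx] using hdarcy2 x hx) hx x.1
  exact ⟨fun x hx => ⟨hu_zero x hx, pd1_eq_zero_of_forall_eq (fun s => hstrat (s, x.2) hx) x.1⟩,
    fun t => ρ (0, t), hstrat⟩
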